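/- For 1 ≤ i ≤ n−1 define the ℤ-linear endomorphism T_i of R(T) by T_i(f) = (1 − e^{a_i − a_{i+1}})^{−1}·(s_i(f) − f), where s_i exchanges e^{a_i} and e^{a_{i+1}}, and define T_0(f) = (1 − e^{a_n − a_1})^{−1}·(s_θ(f) − f), where s_θ exchanges e^{a_n} and e^{a_1}. Then, with indices taken modulo n, these operators satisfy the affine braid relations as endomorphisms of R(T): T_i T_{i+1} T_i = T_{i+1} T_i T_{i+1} for all i ∈ ℤ/nℤ, and T_i T_j = T_j T_i whenever i − j ≢ ±1 (mod n). -/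

import Mathlib

noncomputable section

/-- `R(T) = ℤ[e^{±a_1},…,e^{±a_n}]`, the group algebra over `ℤ` of the free abelian
group `ℤⁿ` of characters. -/
abbrev RT (n : ℕ) : Type := AddMonoidAlgebra ℤ (Fin n →₀ ℤ)

instance (n : ℕ) : IsDomain (RT n) := NoZeroDivisors.to_isDomain _

/-- `e^λ` for a character `λ`. -/
def eexp (n : ℕ) (lam : Fin n →₀ ℤ) : RT n := AddMonoidAlgebra.single lam 1

/-- `b_i = 1 - e^{-a_i}`. -/
def bb (n : ℕ) (i : Fin n) : RT n := 1 - eexp n (-(Finsupp.single i 1))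

/-- The ring automorphism of `R(T)` induced by a permutation of the variables:
`e^{a_i} ↦ e^{a_{σ(i)}}`. -/
def permRT (n : ℕ) (σ : Equiv.Perm (Fin n)) : RT n ≃ₐ[ℤ] RT n :=
  AddMonoidAlgebra.domCongr ℤ ℤ (Finsupp.domCongr (σ : Fin n ≃ Fin n))

/-- Index set of the variables `z_{ij}`, `1 ≤ i ≤ j ≤ n`. -/
abbrev Idx (n : ℕ) : Type := {p : Fin n × Fin n // p.1 ≤ p.2}

/-- An element of `Idx n` from natural-number data. -/
def mkIdx (n : ℕ) (a b : ℕ) (ha : a < n) (hb : b < n) (hab : a ≤ b) : Idx n :=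
  ⟨(⟨a, ha⟩, ⟨b, hb⟩), Fin.mk_le_mk.mpr hab⟩

/-- The defining relation `(b_i - b_j)·z_{ij} - z_{i,j-1} + z_{i+1,j}` (0-based indices). -/
def relGen (n : ℕ) (i j : ℕ) (hi : i < n) (hj : j < n) (hij : i < j) :
    MvPolynomial (Idx n) (RT n) :=
  MvPolynomial.C (bb n ⟨i, hi⟩ - bb n ⟨j, hj⟩) * MvPolynomial.X (mkIdx n i j hi hj hij.le)
    - MvPolynomial.X (mkIdx n i (j - 1) hi (by omega) (by omega))
    + MvPolynomial.X (mkIdx n (i + 1) j (by omega) hj (by omega))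

/-- The ideal of relations of the centralizer family. -/
def centIdeal (n : ℕ) : Ideal (MvPolynomial (Idx n) (RT n)) :=
  Ideal.span {f | ∃ (i j : ℕ) (hi : i < n) (hj : j < n) (hij : i < j), f = relGen n i j hi hj hij}

/-- The ring `R = R(T)[z_{ij}]/I`. -/
abbrev centRing (n : ℕ) : Type := MvPolynomial (Idx n) (RT n) ⧸ centIdeal n

/-- The class of the generator `z_{ij}` in `R` (0-based indices). -/
def zbar (n : ℕ) (i j : ℕ) (hi : i < n) (hj : j < n) (hij : i ≤ j) : centRing n :=
  Ideal.Quotient.mk (centIdeal n) (MvPolynomial.X (mkIdx n i j hi hj hij))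

/-!
Inside the fraction field of `R(T)` each `T_i` is the Demazure operator
`y ↦ (s_i y - y) / (1 - e^{α_i})` with `α_i = a_i - a_{i+1}`. For three distinct indices
`i, j, k` the transpositions `s = (i j)`, `t = (j k)` satisfy `sts = tst`, and they act on
`a = e^{a_i - a_j}`, `b = e^{a_j - a_k}` by `s a = a⁻¹`, `t b = b⁻¹`, `s b = t a = ab`; pushing
`s` and `t` through the quotients turns both sides of the braid relation into the same rational
expression in `a`, `b` and the six translates of `y`. Disjoint transpositions commute and fix
each other's roots, which gives the commutation relations. Since `n ≥ 3`, the cyclic indices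
`i, i + 1, i + 2` are distinct, so `s_θ` needs no separate treatment.
-/

open Equiv Finsupp

section Demazure

variable {K : Type*} [Field K]

def demazure (s : K ≃+* K) (a y : K) : K := (s y - y) / (1 - a)

theorem demazure_braid {s t : K ≃+* K} {a b : K}
    (hs : ∀ y, s (s y) = y) (ht : ∀ y, t (t y) = y) (hst : ∀ y, s (t (s y)) = t (s (t y)))
    (hsa : s a = a⁻¹) (htb : t b = b⁻¹) (hsb : s b = a * b) (hta : t a = a * b)
    (ha : a ≠ 0) (hb : b ≠ 0) (ha1 : a ≠ 1) (hb1 : b ≠ 1) (hab1 : a * b ≠ 1) (y : K) :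
    demazure s a (demazure t b (demazure s a y)) =
      demazure t b (demazure s a (demazure t b y)) := by
  have ha1' : 1 - a ≠ 0 := sub_ne_zero.mpr ha1.symm
  have hb1' : 1 - b ≠ 0 := sub_ne_zero.mpr hb1.symm
  have hab1' : 1 - a * b ≠ 0 := sub_ne_zero.mpr hab1.symm
  have hba1' : 1 - b * a ≠ 0 := by rwa [mul_comm]
  simp only [demazure, map_div₀, map_sub, map_one, map_mul, hsa, htb, hsb, hta, hs, ht, hst,
    inv_mul_cancel_left₀ ha, mul_inv_cancel_right₀ hb]
  field_simp
  ring

theorem demazure_comm {s t : K ≃+* K} {a b : K}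
    (hst : ∀ y, s (t y) = t (s y)) (hsb : s b = b) (hta : t a = a)
    (ha1 : a ≠ 1) (hb1 : b ≠ 1) (y : K) :
    demazure s a (demazure t b y) = demazure t b (demazure s a y) := by
  have ha1' : 1 - a ≠ 0 := sub_ne_zero.mpr ha1.symm
  have hb1' : 1 - b ≠ 0 := sub_ne_zero.mpr hb1.symm
  simp only [demazure, map_div₀, map_sub, map_one, hsb, hta, hst]
  field_simp
  ring

theorem algebraMap_eq_demazure {A : Type*} [CommRing A] [Algebra A K] [IsFractionRing A K]
    (h : A ≃+* A) {c x y : A} (hc : c ≠ 1) (hxy : (1 - c) * x = h y - y) :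
    algebraMap A K x =
      demazure (IsFractionRing.ringEquivOfRingEquiv h) (algebraMap A K c) (algebraMap A K y) := by
  have hc' : 1 - algebraMap A K c ≠ 0 := by
    rw [sub_ne_zero, ne_comm, ← map_one (algebraMap A K)]
    exact (IsFractionRing.injective A K).ne hc
  rw [demazure, IsFractionRing.ringEquivOfRingEquiv_algebraMap, eq_div_iff hc', mul_comm,
    ← map_one (algebraMap A K), ← map_sub, ← map_sub, ← map_mul, hxy]

end Demazure

theorem Fin.self_ne_add_one {n : ℕ} [NeZero n] (hn : 2 ≤ n) (i : Fin n) : i ≠ i + 1 := by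
  rw [Ne, left_eq_add, Fin.ext_iff, Fin.val_one', Fin.val_zero, Nat.mod_eq_of_lt (by omega)]
  omega

theorem Fin.self_ne_add_one_add_one {n : ℕ} [NeZero n] (hn : 3 ≤ n) (i : Fin n) :
    i ≠ i + 1 + 1 := by
  rw [Ne, add_assoc, left_eq_add, Fin.ext_iff, Fin.val_add, Fin.val_one', Nat.add_mod_mod,
    Nat.mod_add_mod, Fin.val_zero, Nat.mod_eq_of_lt (by omega)]
  omega

section Characters

variable {n : ℕ}

theorem eexp_add (l m : Fin n →₀ ℤ) : eexp n (l + m) = eexp n l * eexp n m := by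
  simp [eexp, AddMonoidAlgebra.single_mul_single]

theorem eexp_eq_one_iff {l : Fin n →₀ ℤ} : eexp n l = 1 ↔ l = 0 :=
  AddMonoidAlgebra.single_left_inj one_ne_zero

theorem permRT_eexp (σ : Perm (Fin n)) (l : Fin n →₀ ℤ) :
    permRT n σ (eexp n l) = eexp n (l.equivMapDomain σ) := by
  simp [permRT, eexp]

def permRTHom (n : ℕ) : Perm (Fin n) →* RingAut (RT n) where
  toFun σ := permRT n σ
  map_one' := by ext; simp [permRT, Perm.one_def]
  map_mul' σ τ := by ext; simp [permRT, Perm.mul_def, equivMapDomain_trans]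

def root (i j : Fin n) : Fin n →₀ ℤ := single i 1 - single j 1

theorem root_add_root (i j k : Fin n) : root i j + root j k = root i k := by
  simp only [root]; abel

theorem root_ne_zero {i j : Fin n} (h : i ≠ j) : root i j ≠ 0 := by
  intro h0
  have := DFunLike.congr_fun h0 i
  simp [root, h.symm] at this

theorem equivMapDomain_root (σ : Perm (Fin n)) (i j : Fin n) :
    (root i j).equivMapDomain σ = root (σ i) (σ j) := by
  ext; simp [root, single_apply, Equiv.eq_symm_apply]

end Characters

section FractionField

variable {n : ℕ}

abbrev FracRT (n : ℕ) : Type := FractionRing (RT n)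

def permK (n : ℕ) : Perm (Fin n) →* RingAut (FracRT n) :=
  (IsFractionRing.ringEquivOfRingEquivHom (RT n) (FracRT n)).comp (permRTHom n)

def eexpK (l : Fin n →₀ ℤ) : FracRT n := algebraMap (RT n) (FracRT n) (eexp n l)

theorem eexpK_add (l m : Fin n →₀ ℤ) : eexpK (l + m) = eexpK l * eexpK m := by
  rw [eexpK, eexp_add, map_mul]; rfl

theorem eexpK_mul_eexpK_neg (l : Fin n →₀ ℤ) : eexpK l * eexpK (-l) = 1 := by
  rw [← eexpK_add, add_neg_cancel, eexpK, eexp_eq_one_iff.mpr rfl, map_one]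

theorem eexpK_neg (l : Fin n →₀ ℤ) : eexpK (-l) = (eexpK l)⁻¹ :=
  (inv_eq_of_mul_eq_one_right (eexpK_mul_eexpK_neg l)).symm

theorem eexpK_root_swap (i j : Fin n) : eexpK (root j i) = (eexpK (root i j))⁻¹ := by
  rw [← eexpK_neg, root, root, neg_sub]

theorem eexpK_ne_zero (l : Fin n →₀ ℤ) : eexpK l ≠ 0 :=
  left_ne_zero_of_mul_eq_one (eexpK_mul_eexpK_neg l)

theorem eexpK_ne_one {l : Fin n →₀ ℤ} (hl : l ≠ 0) : eexpK l ≠ 1 := by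
  rw [eexpK, ← map_one (algebraMap (RT n) (FracRT n)), (IsFractionRing.injective _ _).ne_iff,
    Ne, eexp_eq_one_iff]
  exact hl

theorem permK_eexpK_root (σ : Perm (Fin n)) (i j : Fin n) :
    permK n σ (eexpK (root i j)) = eexpK (root (σ i) (σ j)) := by
  simp [permK, permRTHom, eexpK, permRT_eexp, equivMapDomain_root]

def demazureK (i j : Fin n) : FracRT n → FracRT n :=
  demazure (permK n (swap i j)) (eexpK (root i j))

theorem demazureK_braid {i j k : Fin n} (hij : i ≠ j) (hjk : j ≠ k) (hik : i ≠ k) (y : FracRT n) :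
    demazureK i j (demazureK j k (demazureK i j y)) =
      demazureK j k (demazureK i j (demazureK j k y)) := by
  have hinv : ∀ (a b : Fin n) (y : FracRT n), permK n (swap a b) (permK n (swap a b) y) = y := by
    intro a b y
    rw [← RingAut.mul_apply, ← map_mul, swap_mul_self, map_one, RingAut.one_apply]
  have hperm : swap i j * swap j k * swap i j = swap j k * swap i j * swap j k := by
    rw [swap_mul_swap_mul_swap hij hik, swap_comm i j, swap_comm j k,
      swap_mul_swap_mul_swap hjk.symm hik.symm, swap_comm]
  have hmul : eexpK (root i j) * eexpK (root j k) = eexpK (root i k) := by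
    rw [← eexpK_add, root_add_root]
  refine demazure_braid (hinv i j) (hinv j k) (fun y => ?_) ?_ ?_ ?_ ?_ (eexpK_ne_zero _)
    (eexpK_ne_zero _) (eexpK_ne_one (root_ne_zero hij)) (eexpK_ne_one (root_ne_zero hjk))
    (hmul ▸ eexpK_ne_one (root_ne_zero hik)) y
  · simp only [← RingAut.mul_apply, ← map_mul, ← mul_assoc, hperm]
  all_goals simp only [permK_eexpK_root, swap_apply_left, swap_apply_right,
    swap_apply_of_ne_of_ne hik.symm hjk.symm, swap_apply_of_ne_of_ne hij hik, hmul,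
    eexpK_root_swap i j, eexpK_root_swap j k]

theorem demazureK_comm {i j k l : Fin n} (h : [i, j, k, l].Nodup) (y : FracRT n) :
    demazureK i j (demazureK k l y) = demazureK k l (demazureK i j y) := by
  have hne := h
  simp only [List.nodup_cons, List.mem_cons, List.not_mem_nil, or_false, not_or] at hne
  obtain ⟨⟨hij, hik, hil⟩, ⟨hjk, hjl⟩, hkl, -⟩ := hne
  refine demazure_comm (fun y => ?_) ?_ ?_ (eexpK_ne_one (root_ne_zero hij))
    (eexpK_ne_one (root_ne_zero hkl)) y
  · rw [← RingAut.mul_apply, ← map_mul, (Perm.disjoint_swap_swap h).commute.eq, map_mul,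
      RingAut.mul_apply]
  · rw [permK_eexpK_root, swap_apply_of_ne_of_ne (Ne.symm hik) (Ne.symm hjk),
      swap_apply_of_ne_of_ne (Ne.symm hil) (Ne.symm hjl)]
  · rw [permK_eexpK_root, swap_apply_of_ne_of_ne hik hil, swap_apply_of_ne_of_ne hjk hjl]

end FractionField

/-- the affine level-zero Demazure operators on `R(T)` satisfy the affine braid
relations. Here, for `i ∈ ℤ/nℤ` (realized as `Fin n` with cyclic successor `i + 1`), `T i` is
the unique `ℤ`-linear endomorphism of `R(T)` with
`(1 - e^{a_i - a_{i+1}}) · T_i(f) = s_i(f) - f`, where `s_i` exchanges `e^{a_i}` and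
`e^{a_{i+1}}` (for `i = n` this is `T_0`, built from `s_θ` and `1 - e^{a_n - a_1}`). -/
theorem stmt15 (n : ℕ) [NeZero n] (hn : 3 ≤ n) (T : Fin n → RT n →ₗ[ℤ] RT n)
    (hT : ∀ i : Fin n, ∀ f : RT n,
      (1 - eexp n (Finsupp.single i 1 - Finsupp.single (i + 1) 1)) * T i f
        = permRT n (Equiv.swap i (i + 1)) f - f) :
    (∀ i : Fin n, ∀ f : RT n, T i (T (i + 1) (T i f)) = T (i + 1) (T i (T (i + 1) f))) ∧
    (∀ i j : Fin n, j ≠ i + 1 → i ≠ j + 1 → ∀ f : RT n, T i (T j f) = T j (T i f)) := by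
  have hsucc : ∀ i : Fin n, i ≠ i + 1 := Fin.self_ne_add_one (by omega)
  have hTK : ∀ i f, algebraMap (RT n) (FracRT n) (T i f) =
      demazureK i (i + 1) (algebraMap (RT n) (FracRT n) f) := fun i f =>
    algebraMap_eq_demazure _ (mt eexp_eq_one_iff.mp (root_ne_zero (hsucc i))) (hT i f)
  have hinj := IsFractionRing.injective (RT n) (FracRT n)
  refine ⟨fun i f => hinj ?_, fun i j hji hij f => ?_⟩
  · simp only [hTK]
    exact demazureK_braid (hsucc i) (hsucc (i + 1)) (Fin.self_ne_add_one_add_one hn i) _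
  · rcases eq_or_ne i j with rfl | hne
    · rfl
    refine hinj ?_
    simp only [hTK]
    refine demazureK_comm ?_ _
    simp [hsucc, hne, hij, hji.symm]
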